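/- arXiv:1408.3694 — 2 statements merged into one kernel-verified Lean document; each statement's English description precedes it below -/
import Mathlib

section
/- Let (A,⊛) be a complemented category with generator X and let M be a finitely generated A-module over a ring k. Then for each p ≥ 0 the shifted module Σ_p M, defined by (Σ_p M)_V = ⊕_{h ∈ Hom_A(X^p,V)} M_{W_h} where W_h is the complement of h(X^p) in V, is a finitely generated A-module. -/
open CategoryTheory CategoryTheory.Limits CategoryTheory.MonoidalCategory

universe u v

variable {A : Type u} [Category.{v} A] [MonoidalCategory A]

/-- The canonical morphism `V ⟶ V ⊗ V'` coming from the fact that the monoidal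
unit is initial. -/
def canL (hI : IsInitial (𝟙_ A)) (V V' : A) : V ⟶ V ⊗ V' :=
  (ρ_ V).inv ≫ (V ◁ hI.to V')

/-- The canonical morphism `V' ⟶ V ⊗ V'` coming from the fact that the monoidal
unit is initial. -/
def canR (hI : IsInitial (𝟙_ A)) (V V' : A) : V' ⟶ V ⊗ V' :=
  (λ_ V').inv ≫ (hI.to V ▷ V')

/-- `d : D ⟶ V` is a complement of the subobject `c : C ⟶ V`. -/
def IsComplement (hI : IsInitial (𝟙_ A)) {C V D : A} (c : C ⟶ V) (d : D ⟶ V) : Prop :=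
  ∃ φ : C ⊗ D ≅ V, canL hI C D ≫ φ.hom = c ∧ canR hI C D ≫ φ.hom = d

/-- A complemented category: a symmetric monoidal category in which every
morphism is a monomorphism, the monoidal unit is initial, morphisms out of a
tensor product are determined by their precompositions with the two canonical
morphisms, and every subobject has a complement, unique up to isomorphism. -/
structure ComplementedCategory (A : Type u) [Category.{v} A] [MonoidalCategory A]
    [SymmetricCategory A] : Prop where
  mono : ∀ {V W : A} (f : V ⟶ W), Mono f
  unitInitial : Nonempty (IsInitial (𝟙_ A))
  hom_ext : ∀ (hI : IsInitial (𝟙_ A)) {V V' W : A} (f g : V ⊗ V' ⟶ W),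
    canL hI V V' ≫ f = canL hI V V' ≫ g → canR hI V V' ≫ f = canR hI V V' ≫ g → f = g
  compl_exists : ∀ (hI : IsInitial (𝟙_ A)) {C V : A} (c : C ⟶ V),
    ∃ (D : A) (d : D ⟶ V), IsComplement hI c d
  compl_unique : ∀ (hI : IsInitial (𝟙_ A)) {C V D D' : A} (c : C ⟶ V)
    (d : D ⟶ V) (d' : D' ⟶ V), IsComplement hI c d → IsComplement hI c d' →
    ∃ ψ : D ≅ D', ψ.hom ≫ d' = d

/-- Iterated tensor powers of an object. -/
def tpow (X : A) : ℕ → A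
  | 0 => 𝟙_ A
  | n + 1 => tpow X n ⊗ X

/-- `X` is a generator: every object is isomorphic to a unique tensor power of
`X` (whose exponent is called the `X`-rank of the object). -/
def IsGen (X : A) : Prop :=
  ∀ V : A, ∃! i : ℕ, Nonempty (V ≅ tpow X i)

universe w

variable (k : Type w) [Ring k]

/-- A family of submodules of the values of a functor `M : A ⥤ Mod_k` forms a
subfunctor when it is preserved by all the maps of `M`. -/
def IsSubfunctor (M : A ⥤ ModuleCat.{w} k)
    (N : ∀ c : A, Submodule k (M.obj c)) : Prop :=
  ∀ {c c' : A} (f : c ⟶ c') (x : M.obj c), x ∈ N c → M.map f x ∈ N c'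

/-- An `A`-module (functor `A ⥤ Mod_k`) is finitely generated if finitely many
elements generate it: the only subfunctor containing them is the whole module. -/
def IsFinitelyGenerated (M : A ⥤ ModuleCat.{w} k) : Prop :=
  ∃ (n : ℕ) (c : Fin n → A) (x : ∀ i, M.obj (c i)),
    ∀ N : ∀ d : A, Submodule k (M.obj d), IsSubfunctor k M N →
      (∀ i, x i ∈ N (c i)) → ∀ d : A, N d = ⊤

/-- A subfunctor is finitely generated if finitely many of its elements
generate it. -/
def SubfunctorFG (M : A ⥤ ModuleCat.{w} k)
    (N : ∀ c : A, Submodule k (M.obj c)) : Prop :=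
  ∃ (n : ℕ) (c : Fin n → A) (x : ∀ i, M.obj (c i)),
    (∀ i, x i ∈ N (c i)) ∧
    ∀ N' : ∀ d : A, Submodule k (M.obj d), IsSubfunctor k M N' →
      (∀ d : A, N' d ≤ N d) → (∀ i, x i ∈ N' (c i)) → ∀ d : A, N' d = N d

/-- The category of `A`-modules over `k` is Noetherian: every subfunctor of a
finitely generated `A`-module is finitely generated. -/
def ModulesNoetherian : Prop :=
  ∀ M : A ⥤ ModuleCat.{w} k, IsFinitelyGenerated k M →
    ∀ N : ∀ c : A, Submodule k (M.obj c), IsSubfunctor k M N →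
      SubfunctorFG k M N

/-! The image of `Xᵖ ⊗ U` under `canL` has complement `U`, so `Σ_p M` at `Xᵖ ⊗ U` contains a
copy of `M_U` in its `canL`-summand. These copies form a natural transformation
`M ⟶ Σ_p M ∘ (Xᵖ ⊗ -)`, and every summand `M_{W_h}` of `(Σ_p M)_V` is the image of the copy at
`U = W_h` under the isomorphism `Xᵖ ⊗ W_h ≅ V` exhibiting `W_h` as a complement of `h`. Hence
the images of generators of `M` generate `Σ_p M`. -/

section Generation

variable {k}

theorem IsSubfunctor.comap_natTrans {M S : A ⥤ ModuleCat.{w} k} {F : A ⥤ A}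
    (g : M ⟶ F ⋙ S) {N : ∀ V : A, Submodule k (S.obj V)} (hN : IsSubfunctor k S N) :
    IsSubfunctor k M fun U => (N (F.obj U)).comap (g.app U).hom := by
  intro U U' f m hm
  simp only [Submodule.mem_comap] at hm ⊢
  rw [← ModuleCat.comp_apply, g.naturality, ModuleCat.comp_apply]
  exact hN (F.map f) _ hm

theorem IsFinitelyGenerated.of_natTrans {M S : A ⥤ ModuleCat.{w} k}
    (hM : IsFinitelyGenerated k M) (F : A ⥤ A) (g : M ⟶ F ⋙ S)
    (hspan : ∀ V : A, Submodule.span k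
      {s | ∃ (U : A) (φ : F.obj U ⟶ V) (m : M.obj U), S.map φ (g.app U m) = s} = ⊤) :
    IsFinitelyGenerated k S := by
  obtain ⟨n, c, x, hx⟩ := hM
  refine ⟨n, fun i => F.obj (c i), fun i => g.app (c i) (x i), fun N hN hxN V => ?_⟩
  have hpull := hx _ (hN.comap_natTrans g) hxN
  rw [eq_top_iff, ← hspan V, Submodule.span_le]
  rintro _ ⟨U, φ, m, rfl⟩
  have hm : m ∈ (N (F.obj U)).comap (g.app U).hom := by rw [hpull U]; trivial
  exact hN φ _ hm

end Generation

section Monoidal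

theorem canL_whiskerLeft (hI : IsInitial (𝟙_ A)) (Y : A) {U U' : A} (f : U ⟶ U') :
    canL hI Y U ≫ Y ◁ f = canL hI Y U' := by
  simp only [canL, Category.assoc, ← MonoidalCategory.whiskerLeft_comp]
  congr 2
  exact hI.hom_ext _ _

theorem canR_whiskerLeft (hI : IsInitial (𝟙_ A)) (Y : A) {U U' : A} (f : U ⟶ U') :
    canR hI Y U ≫ Y ◁ f = f ≫ canR hI Y U' := by
  simp only [canR, Category.assoc]
  rw [← whisker_exchange, leftUnitor_inv_naturality_assoc]

theorem isComplement_canL_canR (hI : IsInitial (𝟙_ A)) (Y U : A) :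
    IsComplement hI (canL hI Y U) (canR hI Y U) :=
  ⟨Iso.refl _, Category.comp_id _, Category.comp_id _⟩

end Monoidal

/-- The data presenting the shift `S = Σ_Y M` of `M` by an object `Y` (the paper's `Y = Xᵖ`). -/
structure ShiftData (hI : IsInitial (𝟙_ A)) (Y : A) [∀ V : A, DecidableEq (Y ⟶ V)]
    (M S : A ⥤ ModuleCat.{w} k) where
  W : ∀ V : A, (Y ⟶ V) → A
  incl : ∀ (V : A) (h : Y ⟶ V), W V h ⟶ V
  isComplement : ∀ (V : A) (h : Y ⟶ V), IsComplement hI h (incl V h)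
  ι : ∀ {V V' : A} (f : V ⟶ V') (h : Y ⟶ V), W V h ⟶ W V' (h ≫ f)
  ι_incl : ∀ {V V' : A} (f : V ⟶ V') (h : Y ⟶ V), ι f h ≫ incl V' (h ≫ f) = incl V h ≫ f
  e : ∀ V : A, S.obj V ≃ₗ[k] DirectSum (Y ⟶ V) (fun h => M.obj (W V h))
  e_map_of : ∀ {V V' : A} (f : V ⟶ V') (h : Y ⟶ V) (x : M.obj (W V h)),
    e V' (S.map f ((e V).symm (DirectSum.of (fun h' => M.obj (W V h')) h x))) =
      DirectSum.of (fun h' => M.obj (W V' h')) (h ≫ f) (M.map (ι f h) x)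

namespace ShiftData

variable {k} [SymmetricCategory A] (hA : ComplementedCategory A) {hI : IsInitial (𝟙_ A)} {Y : A}
  [∀ V : A, DecidableEq (Y ⟶ V)] {M S : A ⥤ ModuleCat.{w} k} (D : ShiftData k hI Y M S)

noncomputable def complIso (U : A) : U ≅ D.W (Y ⊗ U) (canL hI Y U) :=
  Classical.choose <| hA.compl_unique hI _ _ _ (isComplement_canL_canR hI Y U)
    (D.isComplement _ (canL hI Y U))

theorem complIso_hom_incl (U : A) :
    (D.complIso hA U).hom ≫ D.incl (Y ⊗ U) (canL hI Y U) = canR hI Y U :=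
  Classical.choose_spec <| hA.compl_unique hI _ _ _ (isComplement_canL_canR hI Y U)
    (D.isComplement _ (canL hI Y U))

noncomputable def incCanL (U : A) : M.obj U →ₗ[k] S.obj (Y ⊗ U) :=
  (D.e (Y ⊗ U)).symm.toLinearMap ∘ₗ
    DirectSum.lof k _ (fun h => M.obj (D.W (Y ⊗ U) h)) (canL hI Y U) ∘ₗ
    (M.map (D.complIso hA U).hom).hom

theorem incCanL_apply (U : A) (m : M.obj U) :
    D.incCanL hA U m = (D.e (Y ⊗ U)).symm
      (DirectSum.of _ (canL hI Y U) (M.map (D.complIso hA U).hom m)) :=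
  rfl

theorem map_incCanL {U V : A} (f : Y ⊗ U ⟶ V) {h : Y ⟶ V} (hf : canL hI Y U ≫ f = h)
    (u : U ⟶ D.W V h) (hu : u ≫ D.incl V h = canR hI Y U ≫ f) (m : M.obj U) :
    S.map f (D.incCanL hA U m) = (D.e V).symm (DirectSum.of _ h (M.map u m)) := by
  subst hf
  have hmor : (D.complIso hA U).hom ≫ D.ι f (canL hI Y U) = u := by
    have := hA.mono (D.incl V (canL hI Y U ≫ f))
    rw [← cancel_mono (D.incl V _), Category.assoc, D.ι_incl, ← Category.assoc,
      D.complIso_hom_incl, hu]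
  rw [LinearEquiv.eq_symm_apply, incCanL_apply, D.e_map_of, ← hmor, M.map_comp]
  rfl

noncomputable def unit : M ⟶ MonoidalCategory.tensorLeft Y ⋙ S where
  app U := ModuleCat.ofHom (D.incCanL hA U)
  naturality U U' f := by
    ext m
    change D.incCanL hA U' (M.map f m) = S.map (Y ◁ f) (D.incCanL hA U m)
    rw [D.map_incCanL hA (Y ◁ f) (canL_whiskerLeft hI Y f) (f ≫ (D.complIso hA U').hom)
      (by rw [Category.assoc, complIso_hom_incl, canR_whiskerLeft]), M.map_comp]
    rfl

theorem span_map_unit (V : A) :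
    Submodule.span k {s | ∃ (U : A) (φ : Y ⊗ U ⟶ V) (m : M.obj U),
      S.map φ ((D.unit hA).app U m) = s} = ⊤ := by
  refine eq_top_iff.2 fun s _ => ?_
  rw [← (D.e V).symm_apply_apply s]
  induction D.e V s using DirectSum.induction_on with
  | zero => simp
  | of h m =>
    obtain ⟨φ, hφL, hφR⟩ := D.isComplement V h
    refine Submodule.subset_span ⟨_, φ.hom, m, ?_⟩
    refine (D.map_incCanL hA φ.hom hφL (𝟙 _) (by rw [Category.id_comp, hφR]) m).trans ?_
    rw [M.map_id]
    rfl
  | add y z hy hz =>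
    rw [map_add]
    exact add_mem hy hz

end ShiftData

/-- The shift `S = Σ_p M` is presented by its data: for each `h : Xᵖ ⟶ V` a complement
`W V h` of `h` with inclusion `incl V h`, for each `f : V ⟶ V'` the canonical morphism
`ι f h : W V h ⟶ W V' (h ≫ f)` (characterized by `ι f h ≫ incl = incl ≫ f`), and an
`A`-module `S` with `S_V ≃ ⨁_{h : Xᵖ ⟶ V} M_{W V h}` under which the maps of `S` act by the
maps induced by the canonical morphisms. -/
theorem shift_finitely_generated [SymmetricCategory A]
    (hA : ComplementedCategory A) (X : A) (hX : IsGen X)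
    (hI : IsInitial (𝟙_ A)) (p : ℕ)
    [∀ V : A, DecidableEq (tpow X p ⟶ V)]
    (M : A ⥤ ModuleCat.{w} k) (hM : IsFinitelyGenerated k M)
    (W : ∀ V : A, (tpow X p ⟶ V) → A)
    (incl : ∀ (V : A) (h : tpow X p ⟶ V), W V h ⟶ V)
    (hW : ∀ (V : A) (h : tpow X p ⟶ V), IsComplement hI h (incl V h))
    (ι : ∀ {V V' : A} (f : V ⟶ V') (h : tpow X p ⟶ V), W V h ⟶ W V' (h ≫ f))
    (hι : ∀ {V V' : A} (f : V ⟶ V') (h : tpow X p ⟶ V),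
      ι f h ≫ incl V' (h ≫ f) = incl V h ≫ f)
    (S : A ⥤ ModuleCat.{w} k)
    (e : ∀ V : A, S.obj V ≃ₗ[k] DirectSum (tpow X p ⟶ V) (fun h => M.obj (W V h)))
    (he : ∀ {V V' : A} (f : V ⟶ V') (h : tpow X p ⟶ V) (x : M.obj (W V h)),
      e V' (S.map f ((e V).symm
          (DirectSum.of (fun h' => M.obj (W V h')) h x))) =
        DirectSum.of (fun h' => M.obj (W V' h')) (h ≫ f) (M.map (ι f h) x)) :
    IsFinitelyGenerated k S := by
  let D : ShiftData k hI (tpow X p) M S := ⟨W, incl, hW, ι, hι, e, he⟩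
  exact hM.of_natTrans _ (D.unit hA) (D.span_map_unit hA)
end

section
/- Let M be an A-module over a complemented category (A,⊛) with generator X. The torsion subfunctor T(M), defined by T(M)_V = {x ∈ M_V : there exists a morphism f: V → W with M_f(x) = 0}, is an A-submodule of M; in particular each T(M)_V is closed under addition. -/
open CategoryTheory CategoryTheory.Limits CategoryTheory.MonoidalCategory

universe u v

variable {A : Type u} [Category.{v} A] [MonoidalCategory A]

universe w

variable (k : Type w) [Ring k]

/-!
A morphism `a : V ⟶ U` exhibits `U ≅ V ⊗ D` for a complement `D`, and counting `X`-ranks shows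
that `D` depends only on `V` and `U`; hence `Aut U` acts transitively on `V ⟶ U`, and whether
`x ∈ M_V` is killed by a morphism `V ⟶ U` depends only on `U`. If `f : V ⟶ W` kills `x`, then
so do `f ≫ canL` and `f ≫ canR`, hence so does every morphism from `V` to `W ⊗ W'` or `W' ⊗ W`.
This gives a single morphism killing two torsion elements, and shows that
`canL : V' ⟶ V' ⊗ W` kills `M_g x` for every `g : V ⟶ V'`.
-/

lemma tpow_add (X : A) (i : ℕ) : ∀ j : ℕ, Nonempty (tpow X i ⊗ tpow X j ≅ tpow X (i + j))
  | 0 => ⟨ρ_ (tpow X i)⟩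
  | j + 1 => by
    obtain ⟨e⟩ := tpow_add X i j
    exact ⟨(α_ (tpow X i) (tpow X j) X).symm ≪≫ whiskerRightIso e X⟩

lemma IsGen.nonempty_iso_of_tensor_iso {X : A} (hX : IsGen X) {V D D' U : A}
    (e : V ⊗ D ≅ U) (e' : V ⊗ D' ≅ U) : Nonempty (D ≅ D') := by
  obtain ⟨m, ⟨em⟩, -⟩ := hX V
  obtain ⟨i, ⟨ei⟩, -⟩ := hX D
  obtain ⟨j, ⟨ej⟩, -⟩ := hX D'
  obtain ⟨r, -, hr⟩ := hX U
  obtain ⟨ti⟩ := tpow_add X m i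
  obtain ⟨tj⟩ := tpow_add X m j
  have hi : m + i = r :=
    hr _ ⟨e.symm ≪≫ whiskerRightIso em D ≪≫ whiskerLeftIso (tpow X m) ei ≪≫ ti⟩
  have hj : m + j = r :=
    hr _ ⟨e'.symm ≪≫ whiskerRightIso em D' ≪≫ whiskerLeftIso (tpow X m) ej ≪≫ tj⟩
  obtain rfl : i = j := by omega
  exact ⟨ei ≪≫ ej.symm⟩

lemma canL_whiskerLeft_s17 (hI : IsInitial (𝟙_ A)) (V : A) {D D' : A} (θ : D ⟶ D') :
    canL hI V D ≫ V ◁ θ = canL hI V D' := by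
  rw [canL, canL, Category.assoc, ← MonoidalCategory.whiskerLeft_comp]
  congr 2
  exact hI.hom_ext _ _

section Complemented

variable [SymmetricCategory A]

lemma ComplementedCategory.exists_iso_comp_eq (hA : ComplementedCategory A) {X : A}
    (hX : IsGen X) {V U : A} (a b : V ⟶ U) : ∃ σ : U ≅ U, a ≫ σ.hom = b := by
  obtain ⟨hI⟩ := hA.unitInitial
  obtain ⟨D, d, φ, hφ, -⟩ := hA.compl_exists hI a
  obtain ⟨D', d', ψ, hψ, -⟩ := hA.compl_exists hI b
  obtain ⟨θ⟩ := hX.nonempty_iso_of_tensor_iso φ ψ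
  refine ⟨φ.symm ≪≫ whiskerLeftIso V θ ≪≫ ψ, ?_⟩
  calc a ≫ (φ.symm ≪≫ whiskerLeftIso V θ ≪≫ ψ).hom
      = (canL hI V D ≫ V ◁ θ.hom) ≫ ψ.hom := by simp [← hφ]
    _ = b := by rw [canL_whiskerLeft_s17, hψ]

variable {k}

lemma ComplementedCategory.map_apply_eq_zero (hA : ComplementedCategory A) {X : A}
    (hX : IsGen X) (M : A ⥤ ModuleCat.{w} k) {V U : A} {f : V ⟶ U} {x : M.obj V}
    (hx : M.map f x = 0) (f' : V ⟶ U) : M.map f' x = 0 := by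
  obtain ⟨σ, rfl⟩ := hA.exists_iso_comp_eq hX f f'
  simp [hx]

def torsion (hA : ComplementedCategory A) {X : A} (hX : IsGen X) (M : A ⥤ ModuleCat.{w} k)
    (V : A) : Submodule k (M.obj V) where
  carrier := {x | ∃ (W : A) (f : V ⟶ W), M.map f x = 0}
  zero_mem' := ⟨V, 𝟙 V, map_zero _⟩
  add_mem' := by
    rintro x y ⟨W, f, hx⟩ ⟨W', g, hy⟩
    obtain ⟨hI⟩ := hA.unitInitial
    have hx' : M.map (f ≫ canL hI W W') x = 0 := by simp [hx]
    refine ⟨W ⊗ W', g ≫ canR hI W W', ?_⟩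
    rw [map_add, hA.map_apply_eq_zero hX M hx', zero_add]
    simp [hy]
  smul_mem' := by
    rintro r x ⟨W, f, hx⟩
    exact ⟨W, f, by simp [hx]⟩

lemma torsion_isSubfunctor (hA : ComplementedCategory A) {X : A} (hX : IsGen X)
    (M : A ⥤ ModuleCat.{w} k) : IsSubfunctor k M (torsion hA hX M) := by
  rintro V V' g x ⟨W, f, hx⟩
  obtain ⟨hI⟩ := hA.unitInitial
  have hx' : M.map (f ≫ canR hI V' W) x = 0 := by simp [hx]
  refine ⟨V' ⊗ W, canL hI V' W, ?_⟩
  simpa using hA.map_apply_eq_zero hX M hx' (g ≫ canL hI V' W)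

end Complemented

/-- The torsion subfunctor `T(M)_V = {x ∈ M_V | M_f(x) = 0 for some f : V ⟶ W}`
of an `A`-module `M` over a complemented category is an `A`-submodule of `M`;
in particular each `T(M)_V` is closed under addition. -/
theorem torsion_is_subfunctor [SymmetricCategory A]
    (hA : ComplementedCategory A) (X : A) (hX : IsGen X)
    (M : A ⥤ ModuleCat.{w} k) :
    ∃ N : ∀ V : A, Submodule k (M.obj V),
      (∀ V : A, (N V : Set (M.obj V)) =
        {x : M.obj V | ∃ (W : A) (f : V ⟶ W), M.map f x = 0}) ∧
      IsSubfunctor k M N :=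
  ⟨torsion hA hX M, fun _ => rfl, torsion_isSubfunctor hA hX M⟩
end
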